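/- arXiv:1907.02214 — 2 statements merged into one kernel-verified Lean document; each statement's English description precedes it below -/
import Mathlib

section
/- Let k ≥ 1 be an integer. Let T ⊂ ℝ² be a compact convex set with nonempty interior, contained in the closed upper half-plane {(x,y) : y ≥ 0}, whose boundary contains the segment e₀ = [0,1] × {0}. Let L : ℝ² → ℝ be a polynomial satisfying L ≥ 0 on T, L(x,0) > 0 for all x ∈ (0,1), and L > 0 on the interior of T. If Q₁ ∈ P_k(ℝ²) satisfies (i) ∫₀¹ L(x,0) Q₁(x,0) p(x) dx = 0 for every univariate polynomial p of degree at most k, and (ii) ∫_T L Q₁ p dA = 0 for every p ∈ P_{k−1}(ℝ²), then Q₁ = 0. -/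
/-!
Testing (i) with `p(x) = Q₁(x, 0)` gives `∫₀¹ L(x, 0) Q₁(x, 0)² dx = 0`, so `Q₁` vanishes on the
line `y = 0` and `Q₁ = y R` with `deg R ≤ k - 1`. Testing (ii) with `p = R` gives
`∫_T L y R² dA = 0`; the integrand is nonnegative on `T` and `L y > 0` on its interior, so `R`
vanishes on a nonempty open set and is therefore zero.
-/

open MeasureTheory Set

theorem eqOn_zero_interior_of_setIntegral_mul_mul_self_eq_zero {X : Type*}
    [TopologicalSpace X] [MeasurableSpace X] [OpensMeasurableSpace X]
    {μ : Measure X} [μ.IsOpenPosMeasure] {w f : X → ℝ} {s : Set X}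
    (hw : Continuous w) (hf : Continuous f) (hs : MeasurableSet s)
    (hw_nonneg : ∀ x ∈ s, 0 ≤ w x) (hw_pos : ∀ x ∈ interior s, 0 < w x)
    (hint : IntegrableOn (fun x ↦ w x * f x * f x) s μ)
    (hzero : ∫ x in s, w x * f x * f x ∂μ = 0) :
    EqOn f 0 (interior s) := by
  have hnonneg : 0 ≤ᵐ[μ.restrict s] fun x ↦ w x * f x * f x :=
    (ae_restrict_iff' hs).2 <| .of_forall fun x hx ↦
      by simpa only [Pi.zero_apply, mul_assoc] using
        mul_nonneg (hw_nonneg x hx) (mul_self_nonneg (f x))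
  have hae := ae_restrict_of_ae_restrict_of_subset interior_subset
    ((setIntegral_eq_zero_iff_of_nonneg_ae hnonneg hint).1 hzero)
  intro x hx
  have hx0 := Measure.eqOn_open_of_ae_eq hae isOpen_interior
    (by fun_prop) continuousOn_const hx
  simpa [mul_assoc, (hw_pos x hx).ne'] using hx0

theorem pos_of_mem_interior_of_forall_nonneg {E : Type*} [AddCommGroup E] [TopologicalSpace E]
    [IsTopologicalAddGroup E] [Module ℝ E] [ContinuousSMul ℝ E] {ℓ : StrongDual ℝ E} (hℓ : ℓ ≠ 0)
    {T : Set E} (hT : ∀ x ∈ T, 0 ≤ ℓ x) {x : E} (hx : x ∈ interior T) : 0 < ℓ x := by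
  have h := interior_mono (show T ⊆ ℓ ⁻¹' Ici 0 from hT) hx
  rwa [← (ℓ.isOpenMap_of_ne_zero hℓ).preimage_interior_eq_interior_preimage ℓ.continuous,
    interior_Ici] at h

namespace MvPolynomial

theorem X_dvd_of_forall_eval_update_eq_zero {R σ : Type*} [CommRing R] [IsDomain R] [Infinite R]
    [DecidableEq σ] {p : MvPolynomial σ R} {i : σ}
    (h : ∀ x : σ → R, eval (Function.update x i 0) p = 0) : X i ∣ p := by
  -- The remainder `r` of `p` modulo `X i` does not involve `X i` and agrees with `p` on `x i = 0`.
  set r := p.modMonomial (Finsupp.single i 1)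
  have hr_var : ∀ c, coeff c r ≠ 0 → c i = 0 := fun c hc ↦ by
    by_contra hci
    exact hc (coeff_modMonomial_of_le _ (Finsupp.single_le_iff.2 (Nat.one_le_iff_ne_zero.2 hci)))
  rw [X_dvd_iff_modMonomial_eq_zero]
  refine funext fun x ↦ ?_
  have hx : eval x r = eval (Function.update x i 0) r :=
    eval₂_congr _ _ _ fun {j} {c} hj hc ↦ by
      rw [Function.update_of_ne]
      rintro rfl
      exact Finsupp.mem_support_iff.1 hj (hr_var c hc)
  calc eval x r = eval (Function.update x i 0) (X i * p.divMonomial (Finsupp.single i 1) + r) := by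
        simp [hx]
    _ = eval x 0 := by rw [divMonomial_add_modMonomial_single, h x, map_zero]

theorem totalDegree_le_sub_one_of_X_mul {R σ : Type*} [CommSemiring R] [NoZeroDivisors R]
    [Nontrivial R] {p : MvPolynomial σ R} {i : σ} {k : ℕ} (h : (X i * p).totalDegree ≤ k) :
    p.totalDegree ≤ k - 1 := by
  rcases eq_or_ne p 0 with rfl | hp
  · simp
  rw [totalDegree_mul_of_isDomain (X_ne_zero i) hp, totalDegree_X] at h
  omega

theorem eq_zero_of_eqOn_zero_of_isOpen {𝕜 σ : Type*} [RCLike 𝕜] [Fintype σ]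
    {p : MvPolynomial σ 𝕜} {U : Set (σ → 𝕜)} (hU : IsOpen U) (hne : U.Nonempty)
    (h : EqOn (eval · p) 0 U) : p = 0 := by
  obtain ⟨x₀, hx₀⟩ := hne
  have hall := (AnalyticOnNhd.eval_mvPolynomial p).eqOn_zero_of_preconnected_of_eventuallyEq_zero
    isPreconnected_univ (mem_univ x₀) (Filter.eventuallyEq_of_mem (hU.mem_nhds hx₀) h)
  exact funext fun x ↦ by simpa using hall (mem_univ x)

theorem polynomial_eval_aeval {R σ : Type*} [CommSemiring R] (f : σ → Polynomial R)
    (p : MvPolynomial σ R) (x : R) :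
    (aeval f p).eval x = eval (fun i ↦ (f i).eval x) p := by
  rw [aeval_def, polynomial_eval_eval₂, ← eval₂_id]
  congr 1
  ext; simp

theorem exists_polynomial_eval_vecCons_zero {R : Type*} [CommRing R] (Q : MvPolynomial (Fin 2) R) :
    ∃ q : Polynomial R, q.natDegree ≤ Q.totalDegree ∧ ∀ x, q.eval x = eval ![x, 0] Q := by
  refine ⟨aeval ![Polynomial.X, 0] Q, ?_, fun x ↦ ?_⟩
  · simpa using aeval_natDegree_le Q le_rfl _ (n := 1) fun i ↦ by
      fin_cases i <;> simp [Polynomial.natDegree_X_le]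
  · have hpt : (fun i ↦ (![Polynomial.X, 0] i).eval x) = ![x, 0] := by
      ext i; fin_cases i <;> simp
    rw [polynomial_eval_aeval, hpt]

theorem eval_vecCons_zero_eq_zero_of_orthogonal {a b : ℝ} (hab : a < b) {w : ℝ → ℝ}
    (hw : Continuous w) (hw_pos : ∀ x ∈ Ioo a b, 0 < w x) {Q : MvPolynomial (Fin 2) ℝ} {k : ℕ}
    (hQ : Q.totalDegree ≤ k)
    (h : ∀ p : Polynomial ℝ, p.natDegree ≤ k →
      ∫ x in Icc a b, w x * eval ![x, 0] Q * p.eval x = 0)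
    (x : ℝ) : eval ![x, 0] Q = 0 := by
  obtain ⟨q, hq_deg, hq_eval⟩ := exists_polynomial_eval_vecCons_zero Q
  have hq_root : EqOn q.eval 0 (Ioo a b) := by
    have := eqOn_zero_interior_of_setIntegral_mul_mul_self_eq_zero (μ := volume) hw q.continuous
      measurableSet_Ioo (fun x hx ↦ (hw_pos x hx).le) (by rwa [interior_Ioo])
      (((hw.mul q.continuous).mul q.continuous).integrableOn_Icc.mono_set Ioo_subset_Icc_self)
      (by simpa [hq_eval, integral_Icc_eq_integral_Ioo] using h q (hq_deg.trans hQ))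
    rwa [interior_Ioo] at this
  rw [← hq_eval, Polynomial.eq_zero_of_infinite_isRoot _ ((Ioo_infinite hab).mono hq_root),
    Polynomial.eval_zero]

theorem eq_zero_of_setIntegral_mul_mul_self_eq_zero {ι : Type*} [Fintype ι]
    {T : Set (EuclideanSpace ℝ ι)} (hT : IsCompact T) (hT_int : (interior T).Nonempty)
    {w : EuclideanSpace ℝ ι → ℝ} (hw : Continuous w) (hw_nonneg : ∀ z ∈ T, 0 ≤ w z)
    (hw_pos : ∀ z ∈ interior T, 0 < w z) {R : MvPolynomial ι ℝ}
    (h : ∫ z in T, w z * eval z R * eval z R = 0) : R = 0 := by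
  have hR : Continuous fun z : EuclideanSpace ℝ ι ↦ eval z R :=
    (continuous_eval R).comp (PiLp.continuous_ofLp 2 _)
  have hR_int := eqOn_zero_interior_of_setIntegral_mul_mul_self_eq_zero (μ := volume) hw hR
    hT.isClosed.measurableSet hw_nonneg hw_pos
    (((hw.mul hR).mul hR).continuousOn.integrableOn_compact hT) h
  exact eq_zero_of_eqOn_zero_of_isOpen (isOpen_interior.preimage (PiLp.continuous_toLp 2 _))
    ⟨hT_int.some.ofLp, by simpa using hT_int.some_mem⟩ fun x hx ↦ hR_int hx

end MvPolynomial

theorem stmt_2_general (k : ℕ)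
    (T : Set (EuclideanSpace ℝ (Fin 2)))
    (hTcompact : IsCompact T) (hTint : (interior T).Nonempty)
    (hTupper : ∀ x ∈ T, (0:ℝ) ≤ x 1)
    (L : MvPolynomial (Fin 2) ℝ)
    (hLnonneg : ∀ x ∈ T, 0 ≤ MvPolynomial.eval x L)
    (hLe₀pos : ∀ x ∈ Ioo (0:ℝ) 1, 0 < MvPolynomial.eval ![x, 0] L)
    (hLintpos : ∀ x ∈ interior T, 0 < MvPolynomial.eval x L)
    (Q₁ : MvPolynomial (Fin 2) ℝ) (hQ₁deg : Q₁.totalDegree ≤ k)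
    (hi : ∀ p : Polynomial ℝ, p.natDegree ≤ k →
      ∫ x in Icc (0:ℝ) 1,
        MvPolynomial.eval ![x, 0] L * MvPolynomial.eval ![x, 0] Q₁ * p.eval x = 0)
    (hii : ∀ p : MvPolynomial (Fin 2) ℝ, p.totalDegree ≤ k - 1 →
      ∫ z in T,
        MvPolynomial.eval z L * MvPolynomial.eval z Q₁ * MvPolynomial.eval z p = 0) :
    Q₁ = 0 := by
  have h_axis := MvPolynomial.eval_vecCons_zero_eq_zero_of_orthogonal zero_lt_one
    ((MvPolynomial.continuous_eval L).comp (by fun_prop)) hLe₀pos hQ₁deg hi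
  obtain ⟨R, rfl⟩ : MvPolynomial.X 1 ∣ Q₁ :=
    MvPolynomial.X_dvd_of_forall_eval_update_eq_zero fun x ↦ by
      have : Function.update x 1 0 = ![x 0, 0] := by ext i; fin_cases i <;> simp
      rw [this, h_axis]
  have hR_deg := MvPolynomial.totalDegree_le_sub_one_of_X_mul hQ₁deg
  have hy_pos (z) (hz : z ∈ interior T) : 0 < z 1 := by
    have hproj : EuclideanSpace.proj (𝕜 := ℝ) (1 : Fin 2) ≠ 0 := fun h ↦ by
      simpa using congr($h (EuclideanSpace.single 1 1))
    exact pos_of_mem_interior_of_forall_nonneg hproj hTupper hz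
  have hw : Continuous fun z : EuclideanSpace ℝ (Fin 2) ↦ MvPolynomial.eval z L * z 1 :=
    ((MvPolynomial.continuous_eval L).comp (PiLp.continuous_ofLp 2 _)).mul
      (PiLp.continuous_apply 2 _ 1)
  rw [MvPolynomial.eq_zero_of_setIntegral_mul_mul_self_eq_zero (R := R) hTcompact hTint hw
    (fun z hz ↦ mul_nonneg (hLnonneg z hz) (hTupper z hz))
    (fun z hz ↦ mul_pos (hLintpos z hz) (hy_pos z hz))
    (by simpa [mul_assoc, mul_left_comm] using hii R hR_deg),
    mul_zero]

theorem stmt_2 (k : ℕ) (hk : 1 ≤ k)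
    (T : Set (EuclideanSpace ℝ (Fin 2)))
    (hTcompact : IsCompact T) (hTconvex : Convex ℝ T) (hTint : (interior T).Nonempty)
    (hTupper : ∀ x ∈ T, (0:ℝ) ≤ x 1)
    (hTe₀ : ∀ x ∈ Icc (0:ℝ) 1, (WithLp.toLp 2 ![x, 0] : EuclideanSpace ℝ (Fin 2)) ∈ frontier T)
    (L : MvPolynomial (Fin 2) ℝ)
    (hLnonneg : ∀ x ∈ T, 0 ≤ MvPolynomial.eval x L)
    (hLe₀pos : ∀ x ∈ Ioo (0:ℝ) 1, 0 < MvPolynomial.eval ![x, 0] L)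
    (hLintpos : ∀ x ∈ interior T, 0 < MvPolynomial.eval x L)
    (Q₁ : MvPolynomial (Fin 2) ℝ) (hQ₁deg : Q₁.totalDegree ≤ k)
    (hi : ∀ p : Polynomial ℝ, p.natDegree ≤ k →
      ∫ x in Icc (0:ℝ) 1,
        MvPolynomial.eval ![x, 0] L * MvPolynomial.eval ![x, 0] Q₁ * p.eval x = 0)
    (hii : ∀ p : MvPolynomial (Fin 2) ℝ, p.totalDegree ≤ k - 1 →
      ∫ z in T,
        MvPolynomial.eval z L * MvPolynomial.eval z Q₁ * MvPolynomial.eval z p = 0) :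
    Q₁ = 0 :=
  stmt_2_general k T hTcompact hTint hTupper L hLnonneg hLe₀pos hLintpos Q₁ hQ₁deg hi hii
end

section
/- Let k ≥ 1 be an integer. Let T ⊂ ℝ² be a compact convex set with nonempty interior, contained in the closed upper half-plane {(x,y) : y ≥ 0}, whose boundary contains the segment e₀ = [0,1] × {0}. Let L : ℝ² → ℝ be a polynomial satisfying L ≥ 0 on T, L(x,0) > 0 for all x ∈ (0,1), and L > 0 on the interior of T. Then for every univariate polynomial g of degree at most k there exists a unique Q₁ ∈ P_k(ℝ²) such that (i) ∫₀¹ (g(x) − L(x,0) Q₁(x,0)) p(x) dx = 0 for every univariate polynomial p of degree at most k, and (ii) ∫_T L Q₁ p dA = 0 for every p ∈ P_{k−1}(ℝ²). -/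
/-!
Write `Q₁ = q(x) + y R(x, y)` with `q = Q₁(·, 0)` of degree `≤ k` and `R ∈ P_{k-1}`.
Condition (i) involves only `q`: it is a square linear system whose Gram form
`(q, p) ↦ ∫₀¹ L(x, 0) q p` is definite, because `L(·, 0) > 0` on `(0, 1)`. Once `q` is fixed,
condition (ii) is a square linear system for `R` with Gram form `(R, p) ↦ ∫_T L y R p`, which is
definite because `L y > 0` on the interior of `T` and a polynomial vanishing on a nonempty open set
is zero. A linear system on a finite-dimensional space whose Gram form satisfies
`B v v = 0 → v = 0` is uniquely solvable, as `v ↦ B v` is then injective, hence onto the dual.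
-/

open MeasureTheory Set

theorem Submodule.existsUnique_mem_forall_apply_mul_eq {K A : Type*} [Field K] [Ring A]
    [Algebra K A] (I : A →ₗ[K] K) (ℓ a : A) (V : Submodule K A) [FiniteDimensional K V]
    (hdef : ∀ v ∈ V, I (ℓ * v * v) = 0 → v = 0) :
    ∃! v, v ∈ V ∧ ∀ w ∈ V, I (ℓ * v * w) = I (a * w) := by
  let B : V →ₗ[K] Module.Dual K V := LinearMap.mk₂ K (fun v w => I (ℓ * v * w))
    (fun _ _ _ => by simp [mul_add, add_mul]) (fun _ _ _ => by simp)
    (fun _ _ _ => by simp [mul_add]) (fun _ _ _ => by simp)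
  have hB_inj : Function.Injective B := by
    rw [← LinearMap.ker_eq_bot, Submodule.eq_bot_iff]
    exact fun v hv => Subtype.ext (hdef v v.2 (LinearMap.congr_fun hv v))
  have hB_surj : Function.Surjective B :=
    (LinearMap.injective_iff_surjective_of_finrank_eq_finrank
      Subspace.dual_finrank_eq.symm).mp hB_inj
  obtain ⟨v, hv⟩ := hB_surj (I ∘ₗ LinearMap.mulLeft K a ∘ₗ V.subtype)
  refine ⟨v, ⟨v.2, fun w hw => LinearMap.congr_fun hv ⟨w, hw⟩⟩, ?_⟩
  rintro u ⟨hu, hu_eq⟩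
  have hBu : B ⟨u, hu⟩ = B v := by
    rw [hv]
    ext w
    exact hu_eq w w.2
  exact congrArg Subtype.val (hB_inj hBu)

namespace ContinuousMap

variable {X : Type*} [TopologicalSpace X] [T2Space X] [MeasurableSpace X]
  [OpensMeasurableSpace X] (μ : Measure X) [IsFiniteMeasureOnCompacts μ] {S : Set X}

noncomputable def integralOn (hS : IsCompact S) : C(X, ℝ) →ₗ[ℝ] ℝ where
  toFun f := ∫ x in S, f x ∂μ
  map_add' f g := integral_add (f.continuous.continuousOn.integrableOn_compact hS)
    (g.continuous.continuousOn.integrableOn_compact hS)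
  map_smul' c f := integral_smul c f

@[simp]
theorem integralOn_apply (hS : IsCompact S) (f : C(X, ℝ)) :
    integralOn μ hS f = ∫ x in S, f x ∂μ :=
  rfl

theorem apply_eq_zero_of_integralOn_mul_mul_self_eq_zero [μ.IsOpenPosMeasure]
    (hS : IsCompact S) {w f : C(X, ℝ)} (hw : ∀ x ∈ S, 0 ≤ w x)
    (h : integralOn μ hS (w * f * f) = 0) {x : X} (hx : x ∈ interior S) (hwx : 0 < w x) :
    f x = 0 := by
  have h_nonneg : ∀ y ∈ S, 0 ≤ (w * f * f) y := fun y hy => by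
    simpa only [mul_apply, mul_assoc] using mul_nonneg (hw y hy) (mul_self_nonneg (f y))
  have h_ae : ⇑(w * f * f) =ᵐ[μ.restrict S] 0 :=
    (setIntegral_eq_zero_iff_of_nonneg_ae (ae_restrict_of_forall_mem hS.measurableSet h_nonneg)
      ((w * f * f).continuous.continuousOn.integrableOn_compact hS)).mp h
  have h_zero : (w * f * f) x = 0 :=
    Measure.eqOn_open_of_ae_eq (ae_restrict_of_ae_restrict_of_subset interior_subset h_ae)
      isOpen_interior (w * f * f).continuous.continuousOn continuousOn_const hx
  simpa [hwx.ne'] using h_zero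

end ContinuousMap

namespace Polynomial

theorem mem_degreeLT_add_one_iff {R : Type*} [Semiring R] {p : R[X]} {n : ℕ} :
    p ∈ degreeLT R (n + 1) ↔ p.natDegree ≤ n := by
  rw [degreeLT_succ_eq_degreeLE, mem_degreeLE, natDegree_le_iff_degree_le]

theorem totalDegree_toMvPolynomial_le {R σ : Type*} [CommSemiring R] [Nontrivial R] (q : R[X])
    (i : σ) :
    (q.toMvPolynomial i).totalDegree ≤ q.natDegree := by
  conv_lhs => rw [← aeval_X_left_apply q, aeval_eq_sum_range, map_sum]
  refine (MvPolynomial.totalDegree_finsetSum _ _).trans (Finset.sup_le fun n hn => ?_)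
  simp only [map_smul, map_pow, toMvPolynomial_X]
  refine (MvPolynomial.totalDegree_smul_le _ _).trans ?_
  rw [MvPolynomial.totalDegree_X_pow]
  exact Finset.mem_range_succ_iff.mp hn

variable {S : Set ℝ}

noncomputable def integralOn (hS : IsCompact S) : ℝ[X] →ₗ[ℝ] ℝ :=
  ContinuousMap.integralOn volume hS ∘ₗ toContinuousMapAlgHom.toLinearMap

@[simp]
theorem integralOn_apply (hS : IsCompact S) (p : ℝ[X]) :
    integralOn hS p = ∫ x in S, p.eval x :=
  rfl

theorem eq_zero_of_integralOn_mul_mul_self_eq_zero (hS : IsCompact S)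
    (hS_inf : (interior S).Infinite) {w q : ℝ[X]} (hw : ∀ x ∈ S, 0 ≤ w.eval x)
    (hw_pos : ∀ x ∈ interior S, 0 < w.eval x) (h : integralOn hS (w * q * q) = 0) : q = 0 :=
  q.eq_zero_of_infinite_isRoot <| hS_inf.mono fun x hx =>
    ContinuousMap.apply_eq_zero_of_integralOn_mul_mul_self_eq_zero volume hS
      (w := w.toContinuousMap) (f := q.toContinuousMap) hw (by simpa using h) hx (hw_pos x hx)

end Polynomial

namespace MvPolynomial

variable {ι : Type*} {S : Set (EuclideanSpace ℝ ι)}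

noncomputable def toContinuousMapEuclidean : MvPolynomial ι ℝ →ₐ[ℝ] C(EuclideanSpace ℝ ι, ℝ) :=
  aeval fun i => ⟨fun z => z i, by fun_prop⟩

@[simp]
theorem toContinuousMapEuclidean_apply (P : MvPolynomial ι ℝ) (z : EuclideanSpace ℝ ι) :
    toContinuousMapEuclidean P z = eval z P := by
  rw [← ContinuousMap.evalAlgHom_apply (S := ℝ), toContinuousMapEuclidean, ← AlgHom.comp_apply,
    comp_aeval, ← coe_aeval_eq_eval]
  rfl

variable [Fintype ι]

noncomputable def integralOn (hS : IsCompact S) : MvPolynomial ι ℝ →ₗ[ℝ] ℝ :=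
  ContinuousMap.integralOn volume hS ∘ₗ toContinuousMapEuclidean.toLinearMap

@[simp]
theorem integralOn_apply (hS : IsCompact S) (P : MvPolynomial ι ℝ) :
    integralOn hS P = ∫ z in S, eval z P := by
  simp [integralOn]

theorem eq_zero_of_forall_eval_eq_zero_of_isOpen {P : MvPolynomial ι ℝ}
    {U : Set (EuclideanSpace ℝ ι)} (hU : IsOpen U) (hU_ne : U.Nonempty)
    (h : ∀ z ∈ U, eval z P = 0) : P = 0 := by
  obtain ⟨a, ha⟩ := hU_ne
  have h_analytic := AnalyticOnNhd.eval_continuousLinearMap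
    (EuclideanSpace.equiv ι ℝ).toContinuousLinearMap P
  have h_zero := h_analytic.eqOn_zero_of_preconnected_of_eventuallyEq_zero isPreconnected_univ
    (mem_univ a) (Filter.eventually_of_mem (hU.mem_nhds ha) h)
  exact funext fun x => h_zero (mem_univ (WithLp.toLp 2 x))

theorem eq_zero_of_integralOn_mul_mul_self_eq_zero (hS : IsCompact S)
    (hS_ne : (interior S).Nonempty) {w P : MvPolynomial ι ℝ} (hw : ∀ z ∈ S, 0 ≤ eval z w)
    (hw_pos : ∀ z ∈ interior S, 0 < eval z w) (h : integralOn hS (w * P * P) = 0) : P = 0 :=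
  eq_zero_of_forall_eval_eq_zero_of_isOpen isOpen_interior hS_ne fun z hz => by
    simpa using ContinuousMap.apply_eq_zero_of_integralOn_mul_mul_self_eq_zero volume hS
      (w := toContinuousMapEuclidean w) (f := toContinuousMapEuclidean P) (by simpa using hw)
      (by simpa using h) hz (by simpa using hw_pos z hz)

end MvPolynomial

namespace MvPolynomial

theorem totalDegree_le_pred_of_X_mul_le {R σ : Type*} [CommRing R] [IsDomain R] {i : σ}
    {P : MvPolynomial σ R} {n : ℕ} (h : (X i * P).totalDegree ≤ n) : P.totalDegree ≤ n - 1 := by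
  rcases eq_or_ne P 0 with rfl | hP
  · simp
  · rw [totalDegree_mul_of_isDomain (X_ne_zero i) hP, totalDegree_X] at h
    omega

variable {R : Type*} [CommRing R]

noncomputable def restrictXAxis : MvPolynomial (Fin 2) R →ₐ[R] Polynomial R :=
  aeval ![Polynomial.X, 0]

theorem eval_restrictXAxis (Q : MvPolynomial (Fin 2) R) (x : R) :
    (restrictXAxis Q).eval x = eval ![x, 0] Q := by
  have h : (fun i => Polynomial.aeval x (![Polynomial.X, 0] i : Polynomial R)) = ![x, 0] := by
    funext i
    fin_cases i <;> simp
  rw [← Polynomial.coe_aeval_eq_eval, restrictXAxis, ← AlgHom.comp_apply, comp_aeval, h]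
  rfl

theorem natDegree_restrictXAxis_le (Q : MvPolynomial (Fin 2) R) :
    (restrictXAxis Q).natDegree ≤ Q.totalDegree := by
  conv_lhs => rw [Q.as_sum, map_sum]
  refine Polynomial.natDegree_sum_le_of_forall_le _ _ fun d hd => ?_
  rw [restrictXAxis, aeval_monomial]
  refine Polynomial.natDegree_C_mul_le _ _ |>.trans ?_
  refine (Polynomial.natDegree_prod_le _ _).trans ?_
  refine le_trans (Finset.sum_le_sum fun i _ => ?_) (le_totalDegree hd)
  fin_cases i
  · exact Polynomial.natDegree_X_pow_le _
  · exact Polynomial.natDegree_pow_le.trans (by simp)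

@[simp]
theorem restrictXAxis_toMvPolynomial (q : Polynomial R) :
    restrictXAxis (q.toMvPolynomial 0) = q := by
  rw [restrictXAxis, ← AlgHom.comp_apply, aeval_comp_toMvPolynomial]
  simp

@[simp]
theorem restrictXAxis_X_one : restrictXAxis (X 1 : MvPolynomial (Fin 2) R) = 0 := by
  simp [restrictXAxis]

theorem toMvPolynomial_restrictXAxis (Q : MvPolynomial (Fin 2) R) :
    (restrictXAxis Q).toMvPolynomial 0 = aeval ![(X 0 : MvPolynomial (Fin 2) R), 0] Q := by
  have h : (fun i => (![Polynomial.X, 0] i : Polynomial R).toMvPolynomial 0) =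
      ![(X 0 : MvPolynomial (Fin 2) R), 0] := by
    funext i
    fin_cases i <;> simp
  rw [restrictXAxis, ← AlgHom.comp_apply, comp_aeval, h]

theorem X_one_dvd_sub_aeval (Q : MvPolynomial (Fin 2) R) :
    X 1 ∣ Q - aeval ![X 0, 0] Q := by
  induction Q using MvPolynomial.induction_on with
  | C a => simp
  | add p q hp hq => simpa [add_sub_add_comm] using dvd_add hp hq
  | mul_X p i hp =>
    fin_cases i
    · simpa [← sub_mul] using hp.mul_right (X 0)
    · simp

theorem exists_eq_toMvPolynomial_restrictXAxis_add_X_one_mul [IsDomain R]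
    {Q : MvPolynomial (Fin 2) R} {n : ℕ} (hQ : Q.totalDegree ≤ n) :
    ∃ P : MvPolynomial (Fin 2) R,
      P.totalDegree ≤ n - 1 ∧ Q = (restrictXAxis Q).toMvPolynomial 0 + X 1 * P := by
  obtain ⟨P, hP⟩ := X_one_dvd_sub_aeval Q
  rw [toMvPolynomial_restrictXAxis]
  refine ⟨P, totalDegree_le_pred_of_X_mul_le (i := 1) ?_, sub_eq_iff_eq_add'.mp hP⟩
  rw [← hP, ← toMvPolynomial_restrictXAxis]
  exact (totalDegree_sub _ _).trans <| max_le hQ <|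
    (Polynomial.totalDegree_toMvPolynomial_le _ _).trans ((natDegree_restrictXAxis_le Q).trans hQ)

theorem totalDegree_toMvPolynomial_add_X_one_mul_le [Nontrivial R] {q : Polynomial R}
    {P : MvPolynomial (Fin 2) R} {n : ℕ} (hn : 1 ≤ n) (hq : q.natDegree ≤ n)
    (hP : P.totalDegree ≤ n - 1) : (q.toMvPolynomial 0 + X 1 * P).totalDegree ≤ n := by
  refine (totalDegree_add _ _).trans (max_le ((q.totalDegree_toMvPolynomial_le 0).trans hq) ?_)
  refine (totalDegree_mul _ _).trans ?_
  rw [totalDegree_X]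
  omega

end MvPolynomial

open MvPolynomial

theorem setIntegral_sub_mul_mul_eq_zero_iff {S : Set ℝ} (hS : IsCompact S)
    (L Q : MvPolynomial (Fin 2) ℝ) (g p : Polynomial ℝ) :
    ∫ x in S, (g.eval x - eval ![x, 0] L * eval ![x, 0] Q) * p.eval x = 0 ↔
      Polynomial.integralOn hS (restrictXAxis L * restrictXAxis Q * p) =
        Polynomial.integralOn hS (g * p) := by
  have h : ∫ x in S, (g.eval x - eval ![x, 0] L * eval ![x, 0] Q) * p.eval x =
      Polynomial.integralOn hS (g * p - restrictXAxis L * restrictXAxis Q * p) := by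
    simp only [Polynomial.integralOn_apply, Polynomial.eval_sub, Polynomial.eval_mul,
      eval_restrictXAxis, sub_mul]
  rw [h, map_sub, sub_eq_zero, eq_comm]

theorem setIntegral_mul_add_X_mul_mul_eq_zero_iff {ι : Type*} [Fintype ι]
    {S : Set (EuclideanSpace ℝ ι)} (hS : IsCompact S) (L Q P p : MvPolynomial ι ℝ) (i : ι) :
    ∫ z in S, eval z L * eval z (Q + X i * P) * eval z p = 0 ↔
      integralOn hS (L * X i * P * p) = integralOn hS (-(L * Q) * p) := by
  have h : ∫ z in S, eval z L * eval z (Q + X i * P) * eval z p =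
      integralOn hS (L * X i * P * p - -(L * Q) * p) := by
    rw [show L * X i * P * p - -(L * Q) * p = L * (Q + X i * P) * p by ring, integralOn_apply]
    simp only [map_mul]
  rw [h, map_sub, sub_eq_zero]

theorem pos_of_mem_interior_of_forall_nonneg_s3 {n : ℕ} {T : Set (EuclideanSpace ℝ (Fin n))}
    {i : Fin n} (hT : ∀ x ∈ T, 0 ≤ x i) {z : EuclideanSpace ℝ (Fin n)} (hz : z ∈ interior T) :
    0 < z i := by
  simpa using interior_mono (t := {y : EuclideanSpace ℝ (Fin n) | 0 ≤ y i}) hT hz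

theorem stmt_3_general (k : ℕ) (hk : 1 ≤ k)
    (T : Set (EuclideanSpace ℝ (Fin 2)))
    (hTcompact : IsCompact T) (hTint : (interior T).Nonempty)
    (hTupper : ∀ x ∈ T, (0:ℝ) ≤ x 1)
    (hTe₀ : ∀ x ∈ Icc (0:ℝ) 1, (WithLp.toLp 2 ![x, 0] : EuclideanSpace ℝ (Fin 2)) ∈ frontier T)
    (L : MvPolynomial (Fin 2) ℝ)
    (hLnonneg : ∀ x ∈ T, 0 ≤ MvPolynomial.eval x L)
    (hLe₀pos : ∀ x ∈ Ioo (0:ℝ) 1, 0 < MvPolynomial.eval ![x, 0] L)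
    (hLintpos : ∀ x ∈ interior T, 0 < MvPolynomial.eval x L)
    (g : Polynomial ℝ) :
    ∃! Q₁ : MvPolynomial (Fin 2) ℝ, Q₁.totalDegree ≤ k ∧
      (∀ p : Polynomial ℝ, p.natDegree ≤ k →
        ∫ x in Icc (0:ℝ) 1,
          (g.eval x - MvPolynomial.eval ![x, 0] L * MvPolynomial.eval ![x, 0] Q₁) * p.eval x
            = 0) ∧
      (∀ p : MvPolynomial (Fin 2) ℝ, p.totalDegree ≤ k - 1 →
        ∫ z in T,
          MvPolynomial.eval z L * MvPolynomial.eval z Q₁ * MvPolynomial.eval z p = 0) := by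
  have h_edge_nonneg : ∀ x ∈ Icc (0:ℝ) 1, 0 ≤ (restrictXAxis L).eval x := fun x hx => by
    simpa [eval_restrictXAxis] using
      hLnonneg _ (hTcompact.isClosed.frontier_subset (hTe₀ x hx))
  have h_weight_pos : ∀ z ∈ interior T, 0 < eval z (L * X 1) := fun z hz => by
    simpa using mul_pos (hLintpos z hz) (pos_of_mem_interior_of_forall_nonneg_s3 hTupper hz)
  obtain ⟨q, ⟨hq_deg, hq⟩, hq_unique⟩ :=
    (Polynomial.degreeLT ℝ (k + 1)).existsUnique_mem_forall_apply_mul_eq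
      (Polynomial.integralOn isCompact_Icc) (restrictXAxis L) g fun _ _ =>
        Polynomial.eq_zero_of_integralOn_mul_mul_self_eq_zero isCompact_Icc
          (by simpa using Ioo_infinite zero_lt_one) h_edge_nonneg
          (by simpa [eval_restrictXAxis] using hLe₀pos)
  obtain ⟨R, ⟨hR_deg, hR⟩, hR_unique⟩ :=
    (restrictTotalDegree (Fin 2) ℝ (k - 1)).existsUnique_mem_forall_apply_mul_eq
      (integralOn hTcompact) (L * X 1) (-(L * q.toMvPolynomial 0)) fun _ _ =>
        eq_zero_of_integralOn_mul_mul_self_eq_zero hTcompact hTint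
          (fun z hz => by simpa using mul_nonneg (hLnonneg z hz) (hTupper z hz)) h_weight_pos
  rw [Polynomial.mem_degreeLT_add_one_iff] at hq_deg
  rw [mem_restrictTotalDegree] at hR_deg
  refine ⟨q.toMvPolynomial 0 + X 1 * R, ⟨?_, fun p hp => ?_, fun p hp => ?_⟩, ?_⟩
  · exact totalDegree_toMvPolynomial_add_X_one_mul_le hk hq_deg hR_deg
  · rw [setIntegral_sub_mul_mul_eq_zero_iff isCompact_Icc]
    simpa using hq p (Polynomial.mem_degreeLT_add_one_iff.2 hp)
  · exact (setIntegral_mul_add_X_mul_mul_eq_zero_iff hTcompact _ _ _ _ _).2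
      (hR p ((mem_restrictTotalDegree _ _ _).2 hp))
  · rintro Q ⟨hQ_deg, hQ_edge, hQ_int⟩
    obtain ⟨P, hP_deg, hQ⟩ := exists_eq_toMvPolynomial_restrictXAxis_add_X_one_mul hQ_deg
    have h_trace : restrictXAxis Q = q := hq_unique _
      ⟨Polynomial.mem_degreeLT_add_one_iff.2 ((natDegree_restrictXAxis_le Q).trans hQ_deg),
        fun p hp => (setIntegral_sub_mul_mul_eq_zero_iff isCompact_Icc L Q g p).1
          (hQ_edge p (Polynomial.mem_degreeLT_add_one_iff.1 hp))⟩
    rw [h_trace] at hQ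
    have h_P : P = R := hR_unique P
      ⟨(mem_restrictTotalDegree _ _ _).2 hP_deg, fun p hp =>
            (setIntegral_mul_add_X_mul_mul_eq_zero_iff hTcompact _ _ _ _ _).1
          (hQ ▸ hQ_int p ((mem_restrictTotalDegree _ _ _).1 hp))⟩
    rw [hQ, h_P]

theorem stmt_3 (k : ℕ) (hk : 1 ≤ k)
    (T : Set (EuclideanSpace ℝ (Fin 2)))
    (hTcompact : IsCompact T) (hTconvex : Convex ℝ T) (hTint : (interior T).Nonempty)
    (hTupper : ∀ x ∈ T, (0:ℝ) ≤ x 1)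
    (hTe₀ : ∀ x ∈ Icc (0:ℝ) 1, (WithLp.toLp 2 ![x, 0] : EuclideanSpace ℝ (Fin 2)) ∈ frontier T)
    (L : MvPolynomial (Fin 2) ℝ)
    (hLnonneg : ∀ x ∈ T, 0 ≤ MvPolynomial.eval x L)
    (hLe₀pos : ∀ x ∈ Ioo (0:ℝ) 1, 0 < MvPolynomial.eval ![x, 0] L)
    (hLintpos : ∀ x ∈ interior T, 0 < MvPolynomial.eval x L)
    (g : Polynomial ℝ) (hg : g.natDegree ≤ k) :
    ∃! Q₁ : MvPolynomial (Fin 2) ℝ, Q₁.totalDegree ≤ k ∧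
      (∀ p : Polynomial ℝ, p.natDegree ≤ k →
        ∫ x in Icc (0:ℝ) 1,
          (g.eval x - MvPolynomial.eval ![x, 0] L * MvPolynomial.eval ![x, 0] Q₁) * p.eval x
            = 0) ∧
      (∀ p : MvPolynomial (Fin 2) ℝ, p.totalDegree ≤ k - 1 →
        ∫ z in T,
          MvPolynomial.eval z L * MvPolynomial.eval z Q₁ * MvPolynomial.eval z p = 0) :=
  stmt_3_general k hk T hTcompact hTint hTupper hTe₀ L hLnonneg hLe₀pos hLintpos g
end
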